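/- Let D be a digraph with at least one arc. Then the following are equivalent: (i) ⟨D⟩ is a left zero semigroup; (ii) ⟨D⟩ has a unique L-class; (iii) D has exactly one connected component K containing arcs, and the reverse digraph K⁻¹ = {(y,x) : (x,y) an arc of K} is a fan — equivalently, there is a vertex x such that every arc of D has the form (x,y). -/

import Mathlib

/-- The transformation of `{1,…,n}` sending `a` to `b` and fixing all other points. -/
def arcT {n : ℕ} (a b : Fin n) : Fin n → Fin n := fun v => if v = a then b else v

/-- The semigroup `⟨D⟩` generated by the arcs of the digraph `D`; transformations act on
the right, so a product `ε₁ε₂⋯ε_k` is the function `ε_k ∘ ⋯ ∘ ε₁`. -/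
def genSg {n : ℕ} (D : Set (Fin n × Fin n)) : Set (Fin n → Fin n) :=
  { α | ∃ l : List (Fin n × Fin n), l ≠ [] ∧ (∀ p ∈ l, p ∈ D) ∧
      α = l.foldl (fun f p => arcT p.1 p.2 ∘ f) id }

/-- The product `x·y` in the right-action convention: apply `x` first, then `y`. -/
def sgMul {n : ℕ} (x y : Fin n → Fin n) : Fin n → Fin n := y ∘ x

/-- The right ideal `xS¹ = {x} ∪ xS`. -/
def rIdeal {n : ℕ} (S : Set (Fin n → Fin n)) (x : Fin n → Fin n) : Set (Fin n → Fin n) :=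
  insert x { y | ∃ s ∈ S, y = sgMul x s }

/-- The left ideal `S¹x = {x} ∪ Sx`. -/
def lIdeal {n : ℕ} (S : Set (Fin n → Fin n)) (x : Fin n → Fin n) : Set (Fin n → Fin n) :=
  insert x { y | ∃ s ∈ S, y = sgMul s x }

/-- The two-sided ideal `S¹xS¹`. -/
def jIdeal {n : ℕ} (S : Set (Fin n → Fin n)) (x : Fin n → Fin n) : Set (Fin n → Fin n) :=
  { y | ∃ s ∈ insert id S, ∃ t ∈ insert id S, y = sgMul s (sgMul x t) }

def RRel {n : ℕ} (S : Set (Fin n → Fin n)) (x y : Fin n → Fin n) : Prop :=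
  rIdeal S x = rIdeal S y

def LRel {n : ℕ} (S : Set (Fin n → Fin n)) (x y : Fin n → Fin n) : Prop :=
  lIdeal S x = lIdeal S y

def JRel {n : ℕ} (S : Set (Fin n → Fin n)) (x y : Fin n → Fin n) : Prop :=
  jIdeal S x = jIdeal S y

def RTrivial {n : ℕ} (S : Set (Fin n → Fin n)) : Prop :=
  ∀ x ∈ S, ∀ y ∈ S, RRel S x y → x = y

def LTrivial {n : ℕ} (S : Set (Fin n → Fin n)) : Prop :=
  ∀ x ∈ S, ∀ y ∈ S, LRel S x y → x = y

def HTrivial {n : ℕ} (S : Set (Fin n → Fin n)) : Prop :=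
  ∀ x ∈ S, ∀ y ∈ S, RRel S x y → LRel S x y → x = y

def JTrivial {n : ℕ} (S : Set (Fin n → Fin n)) : Prop :=
  ∀ x ∈ S, ∀ y ∈ S, JRel S x y → x = y

/-- `α` has a cycle of length `k`: `k` distinct points `a₀,…,a_{k-1}` with
`α(aᵢ) = a_{i+1 mod k}`. -/
def IsCycleOf {n : ℕ} (α : Fin n → Fin n) (k : ℕ) : Prop :=
  0 < k ∧ ∃ a : ZMod k → Fin n, Function.Injective a ∧ ∀ i, α (a i) = a (i + 1)

/-- `l(D)`: the maximal length of a cycle of an element of `⟨D⟩`. -/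
noncomputable def lD {n : ℕ} (D : Set (Fin n × Fin n)) : ℕ :=
  sSup { k | ∃ α ∈ genSg D, IsCycleOf α k }

/-- The arc set of a graph. -/
def arcsOf {n : ℕ} (G : SimpleGraph (Fin n)) : Set (Fin n × Fin n) :=
  { p | G.Adj p.1 p.2 }

/-- `l(G)` for a graph `G`. -/
noncomputable def lG {n : ℕ} (G : SimpleGraph (Fin n)) : ℕ := lD (arcsOf G)

/-- Reachability along directed walks of `D`. -/
def dreach {n : ℕ} (D : Set (Fin n × Fin n)) : Fin n → Fin n → Prop :=
  Relation.ReflTransGen (fun a b => (a, b) ∈ D)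

/-- The strong component of the vertex `v`. -/
def strongComp {n : ℕ} (D : Set (Fin n × Fin n)) (v : Fin n) : Set (Fin n) :=
  { u | dreach D u v ∧ dreach D v u }

/-- The underlying graph of the digraph `D`. -/
def underlying {n : ℕ} (D : Set (Fin n × Fin n)) : SimpleGraph (Fin n) where
  Adj a b := a ≠ b ∧ ((a, b) ∈ D ∨ (b, a) ∈ D)
  symm := ⟨fun a b h => ⟨h.1.symm, h.2.symm⟩⟩
  loopless := ⟨fun a h => h.1 rfl⟩

/-- `v 0, v 1, …, v r` is a cycle of the digraph `D`. -/
def IsDCycle {n : ℕ} (D : Set (Fin n × Fin n)) (r : ℕ) (v : ℕ → Fin n) : Prop :=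
  1 ≤ r ∧ v r = v 0 ∧ (∀ i < r, ∀ j < r, v i = v j → i = j) ∧
    ∀ i < r, (v i, v (i + 1)) ∈ D

def HasDCycle {n : ℕ} (D : Set (Fin n × Fin n)) : Prop := ∃ r v, IsDCycle D r v

def DAcyclic {n : ℕ} (D : Set (Fin n × Fin n)) : Prop := ¬ HasDCycle D

/-- `G` is a subgroup contained in the transformation semigroup `S`. -/
def IsSubgroupIn {n : ℕ} (S G : Set (Fin n → Fin n)) : Prop :=
  G ⊆ S ∧ (∀ x ∈ G, ∀ y ∈ G, sgMul x y ∈ G) ∧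
    ∃ e ∈ G, (∀ x ∈ G, sgMul e x = x ∧ sgMul x e = x) ∧
      ∀ x ∈ G, ∃ y ∈ G, sgMul x y = e ∧ sgMul y x = e

/-- Every subgroup of `S` is trivial. -/
def SgAperiodic {n : ℕ} (S : Set (Fin n → Fin n)) : Prop :=
  ∀ G, IsSubgroupIn S G → G.Subsingleton


/-!
If every arc of `D` leaves the same vertex `x`, every element of `⟨D⟩` fixes all vertices
but `x` and moves `x`; such a transformation is fixed by right multiplication with any other
one, so `⟨D⟩` is left zero, and then `S¹α = ⟨D⟩` for every `α`. Conversely, left ideals can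
only shrink images, `S¹β ⊆ {γ | im γ ⊆ im β}`. If `(a, b)` and `(c, d)` are arcs with `c ≠ a`,
then `c` lies in the image of `(a → b)` but not of `(c → d)`, so these two generators are not
`L`-related.
-/

section arcT

variable {n : ℕ}

lemma arcT_apply_of_ne {a b v : Fin n} (hv : v ≠ a) : arcT a b v = v := if_neg hv

lemma arcT_apply_ne_self {a b : Fin n} (hab : a ≠ b) (v : Fin n) : arcT a b v ≠ a := by
  unfold arcT
  split_ifs with hv
  exacts [hab.symm, hv]

lemma arcT_mem_genSg {D : Set (Fin n × Fin n)} {a b : Fin n} (h : (a, b) ∈ D) :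
    arcT a b ∈ genSg D :=
  ⟨[(a, b)], List.cons_ne_nil _ _, by simpa using h, rfl⟩

end arcT

section genSg

variable {n : ℕ} {D : Set (Fin n × Fin n)}

lemma genSg_induction {P : (Fin n → Fin n) → Prop}
    (arc : ∀ p ∈ D, P (arcT p.1 p.2))
    (comp : ∀ p ∈ D, ∀ α, P α → P (arcT p.1 p.2 ∘ α)) :
    ∀ α ∈ genSg D, P α := by
  have foldl : ∀ (l : List (Fin n × Fin n)), (∀ p ∈ l, p ∈ D) → ∀ g, P g →
      P (l.foldl (fun f p => arcT p.1 p.2 ∘ f) g) := by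
    intro l
    induction l with
    | nil => exact fun _ _ hg => hg
    | cons p t ih =>
      intro hl g hg
      exact ih (fun q hq => hl q (List.mem_cons_of_mem _ hq)) _
        (comp p (hl p List.mem_cons_self) g hg)
  rintro _ ⟨_ | ⟨p, t⟩, hl, hmem, rfl⟩
  · exact absurd rfl hl
  · exact foldl t (fun q hq => hmem q (List.mem_cons_of_mem _ hq)) _
      (arc p (hmem p List.mem_cons_self))

def MovesOnly (x : Fin n) (α : Fin n → Fin n) : Prop :=
  (∀ v, v ≠ x → α v = v) ∧ α x ≠ x

lemma comp_eq_of_movesOnly {x : Fin n} {α β : Fin n → Fin n} (hα : MovesOnly x α)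
    (hβ : ∀ v, v ≠ x → β v = v) : β ∘ α = α := by
  funext v
  by_cases hv : v = x
  · subst hv
    exact hβ _ hα.2
  · simp only [Function.comp_apply, hα.1 v hv, hβ v hv]

lemma movesOnly_of_mem_genSg (hloop : ∀ u : Fin n, (u, u) ∉ D) {x : Fin n}
    (hD : ∀ p ∈ D, p.1 = x) : ∀ α ∈ genSg D, MovesOnly x α := by
  have arc_movesOnly : ∀ p ∈ D, MovesOnly x (arcT p.1 p.2) := by
    rintro ⟨a, b⟩ hp
    obtain rfl : a = x := hD _ hp
    have hab : a ≠ b := by rintro rfl; exact hloop a hp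
    exact ⟨fun v hv => arcT_apply_of_ne hv, by simpa [arcT] using hab.symm⟩
  refine genSg_induction arc_movesOnly fun p hp α hα => ?_
  rwa [comp_eq_of_movesOnly hα (arc_movesOnly p hp).1]

end genSg

section lIdeal

variable {n : ℕ} {S : Set (Fin n → Fin n)}

lemma lIdeal_eq_of_leftZero (hS : ∀ a ∈ S, ∀ b ∈ S, sgMul a b = a) {z : Fin n → Fin n}
    (hz : z ∈ S) : lIdeal S z = S := by
  ext w
  constructor
  · rintro (rfl | ⟨s, hs, rfl⟩)
    · exact hz
    · rwa [hS s hs z hz]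
  · exact fun hw => Or.inr ⟨w, hw, (hS w hw z hz).symm⟩

lemma range_subset_of_mem_lIdeal {x y : Fin n → Fin n} (hy : y ∈ lIdeal S x) :
    Set.range y ⊆ Set.range x := by
  rcases hy with rfl | ⟨s, -, rfl⟩
  · exact subset_rfl
  · exact Set.range_comp_subset_range s x

lemma arcT_not_mem_lIdeal_arcT {a b c d : Fin n} (hca : c ≠ a) (hcd : c ≠ d) :
    arcT a b ∉ lIdeal S (arcT c d) := fun h => by
  obtain ⟨v, hv⟩ := range_subset_of_mem_lIdeal h ⟨c, arcT_apply_of_ne hca⟩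
  exact arcT_apply_ne_self hcd v hv

end lIdeal

/-- The following are equivalent: `⟨D⟩` is a left zero semigroup;
`⟨D⟩` has a unique `L`-class; all arcs of `D` start at one common vertex `x`
(equivalently, `D` has a unique component containing arcs and its reverse is a fan). -/
theorem stmt19 (n : ℕ) (D : Set (Fin n × Fin n)) (hloop : ∀ u : Fin n, (u, u) ∉ D)
    (hne : D.Nonempty) :
    List.TFAE [
      ∀ a ∈ genSg D, ∀ b ∈ genSg D, sgMul a b = a,
      ∀ x ∈ genSg D, ∀ y ∈ genSg D, LRel (genSg D) x y,
      ∃ x : Fin n, ∀ p ∈ D, p.1 = x] := by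
  tfae_have 1 → 2 := fun h x hx y hy => by
    rw [LRel, lIdeal_eq_of_leftZero h hx, lIdeal_eq_of_leftZero h hy]
  tfae_have 2 → 3 := by
    intro h
    obtain ⟨⟨a, b⟩, hab⟩ := hne
    refine ⟨a, fun ⟨c, d⟩ hcd => by_contra fun hca => ?_⟩
    have hcd_ne : c ≠ d := by rintro rfl; exact hloop c hcd
    apply arcT_not_mem_lIdeal_arcT (S := genSg D) (b := b) hca hcd_ne
    rw [← h _ (arcT_mem_genSg hab) _ (arcT_mem_genSg hcd)]
    exact Set.mem_insert _ _
  tfae_have 3 → 1 := by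
    rintro ⟨x, hx⟩ a ha b hb
    exact comp_eq_of_movesOnly (movesOnly_of_mem_genSg hloop hx a ha)
      (movesOnly_of_mem_genSg hloop hx b hb).1
  tfae_finish
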